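/- arXiv:1506.07328 — 4 statements merged into one kernel-verified Lean document; each statement's English description precedes it below -/
import Mathlib

section
/- (Continuity of the discretized VEM bilinear form, first half of Lemma 3.1.) For all v, w ∈ H one has |a_h(v,w)| ≤ M ‖v‖ ‖w‖ with the explicit constant M = ν_max · max(1, α^*), which depends on ν_max and α^* but not on the subspace K. -/
/-!
Split `v = P v + (v - P v)` and likewise `w`. The consistency term is bounded by
`ν_max ‖P v‖ ‖P w‖`. The stabilization `S` is a positive semidefinite symmetric form with
`S x x ≤ α^* ν_max ‖x‖²`, so Cauchy–Schwarz for `S` bounds the stabilization term by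
`α^* ν_max ‖v - P v‖ ‖w - P w‖`. Both constants are at most `ν_max · max(1, α^*)`, and
Pythagoras, `‖P v‖² + ‖v - P v‖² = ‖v‖²`, together with Cauchy–Schwarz in `ℝ²` gives
`‖P v‖ ‖P w‖ + ‖v - P v‖ ‖w - P w‖ ≤ ‖v‖ ‖w‖`.
-/

open scoped RealInnerProductSpace

theorem mul_add_mul_le_of_sq_add_sq_eq {a b c d x y : ℝ} (hx : 0 ≤ x) (hy : 0 ≤ y)
    (hab : a ^ 2 + b ^ 2 = x ^ 2) (hcd : c ^ 2 + d ^ 2 = y ^ 2) :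
    a * c + b * d ≤ x * y := by
  have hsq : (a * c + b * d) ^ 2 ≤ (x * y) ^ 2 := by
    rw [mul_pow, ← hab, ← hcd]
    nlinarith [sq_nonneg (a * d - b * c)]
  exact (abs_le_of_sq_le_sq hsq (mul_nonneg hx hy)).trans' (le_abs_self _)

namespace LinearMap.BilinForm

theorem abs_apply_le_of_apply_self_le {E : Type*} [SeminormedAddCommGroup E] [Module ℝ E]
    (B : LinearMap.BilinForm ℝ E) (hB : LinearMap.IsSymm B) (hnonneg : ∀ x, 0 ≤ B x x)
    {C : ℝ} (hC : ∀ x, B x x ≤ C * ‖x‖ ^ 2) (x y : E) :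
    |B x y| ≤ C * ‖x‖ * ‖y‖ := by
  have hsq : B x y ^ 2 ≤ (C * ‖x‖ * ‖y‖) ^ 2 :=
    calc B x y ^ 2 ≤ B x x * B y y := B.apply_sq_le_of_symm hnonneg hB x y
      _ ≤ (C * ‖x‖ ^ 2) * (C * ‖y‖ ^ 2) :=
        mul_le_mul (hC x) (hC y) (hnonneg y) ((hnonneg x).trans (hC x))
      _ = (C * ‖x‖ * ‖y‖) ^ 2 := by ring
  refine abs_le_of_sq_le_sq hsq ?_
  rcases (norm_nonneg x).eq_or_lt with hx | hx
  · simp [← hx]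
  · have hC0 : 0 ≤ C := nonneg_of_mul_nonneg_left ((hnonneg x).trans (hC x)) (by positivity)
    positivity

end LinearMap.BilinForm

section BoundedOperator

variable {E : Type*} [SeminormedAddCommGroup E] [InnerProductSpace ℝ E]
  {N : E → E} {c : ℝ}

theorem abs_inner_apply_le_of_norm_apply_le (hN : ∀ v, ‖N v‖ ≤ c * ‖v‖) (v w : E) :
    |⟪N v, w⟫| ≤ c * ‖v‖ * ‖w‖ :=
  (abs_real_inner_le_norm _ _).trans (mul_le_mul_of_nonneg_right (hN v) (norm_nonneg w))

theorem inner_apply_self_le_of_norm_apply_le (hN : ∀ v, ‖N v‖ ≤ c * ‖v‖) (v : E) :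
    ⟪N v, v⟫ ≤ c * ‖v‖ ^ 2 :=
  calc ⟪N v, v⟫ ≤ |⟪N v, v⟫| := le_abs_self _
    _ ≤ c * ‖v‖ * ‖v‖ := abs_inner_apply_le_of_norm_apply_le hN v v
    _ = c * ‖v‖ ^ 2 := by ring

end BoundedOperator

theorem Submodule.norm_starProjection_sq_add_norm_sub_sq {E : Type*} [NormedAddCommGroup E]
    [InnerProductSpace ℝ E] (K : Submodule ℝ E) [K.HasOrthogonalProjection] (v : E) :
    ‖K.starProjection v‖ ^ 2 + ‖v - K.starProjection v‖ ^ 2 = ‖v‖ ^ 2 := by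
  rw [K.norm_sq_eq_add_norm_sq_starProjection v, K.starProjection_orthogonal_val]

theorem vem_discrete_form_continuity_general
    {H : Type*} [NormedAddCommGroup H] [InnerProductSpace ℝ H]
    (K : Submodule ℝ H) [K.HasOrthogonalProjection]
    (P : H →L[ℝ] H) (hP : ∀ v : H, P v = (K.orthogonalProjectionOnto v : H))
    (N : H →L[ℝ] H)
    (νmin νmax : ℝ) (hνmin : 0 < νmin) (hνν : νmin ≤ νmax)
    (hNlow : ∀ v : H, νmin * ‖v‖ ^ 2 ≤ ⟪N v, v⟫)
    (hNhigh : ∀ v : H, ‖N v‖ ≤ νmax * ‖v‖)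
    (S : H →ₗ[ℝ] H →ₗ[ℝ] ℝ) (hSsymm : ∀ v w : H, S v w = S w v)
    (αs αS : ℝ) (hαs : 0 < αs) (hαα : αs ≤ αS)
    (hSlow : ∀ v : H, αs * ⟪N v, v⟫ ≤ S v v)
    (hShigh : ∀ v : H, S v v ≤ αS * ⟪N v, v⟫)
    (ah : H → H → ℝ)
    (hah : ∀ v w : H, ah v w = ⟪N (P v), P w⟫ + S (v - P v) (w - P w)) :
    ∀ v w : H, |ah v w| ≤ (νmax * max 1 αS) * ‖v‖ * ‖w‖ := by
  intro v w
  have hνmax : 0 ≤ νmax := hνmin.le.trans hνν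
  have hSnonneg (x : H) : 0 ≤ S x x :=
    (mul_nonneg hαs.le ((mul_nonneg hνmin.le (sq_nonneg _)).trans (hNlow x))).trans (hSlow x)
  have hSle (x : H) : S x x ≤ αS * νmax * ‖x‖ ^ 2 :=
    calc S x x ≤ αS * ⟪N x, x⟫ := hShigh x
      _ ≤ αS * (νmax * ‖x‖ ^ 2) := mul_le_mul_of_nonneg_left
          (inner_apply_self_le_of_norm_apply_le hNhigh x) (hαs.le.trans hαα)
      _ = αS * νmax * ‖x‖ ^ 2 := by ring
  have hStab := LinearMap.BilinForm.abs_apply_le_of_apply_self_le S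
    ⟨hSsymm⟩ hSnonneg hSle (v - P v) (w - P w)
  have hCons := abs_inner_apply_le_of_norm_apply_le hNhigh (P v) (P w)
  have hPyth (x : H) : ‖P x‖ ^ 2 + ‖x - P x‖ ^ 2 = ‖x‖ ^ 2 := by
    rw [hP]; exact K.norm_starProjection_sq_add_norm_sub_sq x
  calc |ah v w| ≤ νmax * ‖P v‖ * ‖P w‖ + αS * νmax * ‖v - P v‖ * ‖w - P w‖ :=
        hah v w ▸ (abs_add_le _ _).trans (add_le_add hCons hStab)
    _ ≤ νmax * max 1 αS * (‖P v‖ * ‖P w‖ + ‖v - P v‖ * ‖w - P w‖) := by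
        nlinarith [le_max_left 1 αS, le_max_right 1 αS,
          mul_nonneg hνmax (mul_nonneg (norm_nonneg (P v)) (norm_nonneg (P w))),
          mul_nonneg hνmax (mul_nonneg (norm_nonneg (v - P v)) (norm_nonneg (w - P w)))]
    _ ≤ νmax * max 1 αS * (‖v‖ * ‖w‖) := by
        gcongr
        exact mul_add_mul_le_of_sq_add_sq_eq (norm_nonneg v) (norm_nonneg w) (hPyth v) (hPyth w)
    _ = νmax * max 1 αS * ‖v‖ * ‖w‖ := by ring

/-- **Continuity of the discretized VEM bilinear form** (first half of Lemma 3.1).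
For all `v, w ∈ H`, `|a_h(v,w)| ≤ M ‖v‖ ‖w‖` with `M = ν_max * max 1 α^*`. -/
theorem vem_discrete_form_continuity
    {H : Type*} [NormedAddCommGroup H] [InnerProductSpace ℝ H]
    (K : Submodule ℝ H) [K.HasOrthogonalProjection]
    (P : H →L[ℝ] H) (hP : ∀ v : H, P v = (K.orthogonalProjectionOnto v : H))
    (N : H →L[ℝ] H) (hNsa : ∀ v w : H, ⟪N v, w⟫ = ⟪v, N w⟫)
    (νmin νmax : ℝ) (hνmin : 0 < νmin) (hνν : νmin ≤ νmax)
    (hNlow : ∀ v : H, νmin * ‖v‖ ^ 2 ≤ ⟪N v, v⟫)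
    (hNhigh : ∀ v : H, ‖N v‖ ≤ νmax * ‖v‖)
    (S : H →ₗ[ℝ] H →ₗ[ℝ] ℝ) (hSsymm : ∀ v w : H, S v w = S w v)
    (αs αS : ℝ) (hαs : 0 < αs) (hαα : αs ≤ αS)
    (hSlow : ∀ v : H, αs * ⟪N v, v⟫ ≤ S v v)
    (hShigh : ∀ v : H, S v v ≤ αS * ⟪N v, v⟫)
    (ah : H → H → ℝ)
    (hah : ∀ v w : H, ah v w = ⟪N (P v), P w⟫ + S (v - P v) (w - P w)) :
    ∀ v w : H, |ah v w| ≤ (νmax * max 1 αS) * ‖v‖ * ‖w‖ :=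
  vem_discrete_form_continuity_general K P hP N νmin νmax hνmin hνν hNlow hNhigh S hSsymm αs αS hαs
    hαα hSlow hShigh ah hah
end

section
/- (Ellipticity of the discretized VEM bilinear form, second half of Lemma 3.1.) For all v ∈ H one has a_h(v,v) ≥ ν_min (‖P v‖² + α_* ‖v − P v‖²) ≥ α ‖v‖² with the explicit constant α = ν_min · min(1, α_*), which depends on ν_min and α_* but not on the subspace K. -/
open scoped RealInnerProductSpace

/-! On `P v` the discrete form is `⟪N ·, ·⟫`, hence `ν_min`-coercive; on `v - P v` the
stabilisation dominates `α_* ⟪N ·, ·⟫`, hence is `α_* ν_min`-coercive. Pythagoras,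
`‖v‖² = ‖P v‖² + ‖v - P v‖²`, turns the two bounds into one with constant `ν_min min(1, α_*)`. -/

theorem Submodule.norm_sq_eq_norm_sq_starProjection_add_norm_sq_sub
    {H : Type*} [NormedAddCommGroup H] [InnerProductSpace ℝ H]
    (K : Submodule ℝ H) [K.HasOrthogonalProjection] (v : H) :
    ‖v‖ ^ 2 = ‖K.starProjection v‖ ^ 2 + ‖v - K.starProjection v‖ ^ 2 := by
  simpa only [Submodule.starProjection_orthogonal_val] using
    K.norm_sq_eq_add_norm_sq_starProjection v

theorem min_one_mul_add_le_add_mul {a b α : ℝ} (ha : 0 ≤ a) (hb : 0 ≤ b) :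
    min 1 α * (a + b) ≤ a + α * b := by
  have h₁ : min 1 α * a ≤ a := by
    simpa using mul_le_mul_of_nonneg_right (min_le_left 1 α) ha
  have h₂ : min 1 α * b ≤ α * b := mul_le_mul_of_nonneg_right (min_le_right 1 α) hb
  linarith

theorem mul_norm_sq_add_le_inner_add_of_stable {H : Type*} [NormedAddCommGroup H]
    [InnerProductSpace ℝ H] {N : H → H} {S : H →ₗ[ℝ] H →ₗ[ℝ] ℝ} {ν α : ℝ} (hα : 0 ≤ α)
    (hN : ∀ v, ν * ‖v‖ ^ 2 ≤ ⟪N v, v⟫) (hS : ∀ v, α * ⟪N v, v⟫ ≤ S v v) (u w : H) :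
    ν * (‖u‖ ^ 2 + α * ‖w‖ ^ 2) ≤ ⟪N u, u⟫ + S w w := by
  have hw : α * (ν * ‖w‖ ^ 2) ≤ S w w := (mul_le_mul_of_nonneg_left (hN w) hα).trans (hS w)
  linarith [hN u]

theorem vem_discrete_form_ellipticity_general
    {H : Type*} [NormedAddCommGroup H] [InnerProductSpace ℝ H]
    (K : Submodule ℝ H) [K.HasOrthogonalProjection]
    (P : H →L[ℝ] H) (hP : ∀ v : H, P v = (K.orthogonalProjectionOnto v : H))
    (N : H →L[ℝ] H)
    (νmin : ℝ) (hνmin : 0 < νmin)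
    (hNlow : ∀ v : H, νmin * ‖v‖ ^ 2 ≤ ⟪N v, v⟫)
    (S : H →ₗ[ℝ] H →ₗ[ℝ] ℝ)
    (αs : ℝ) (hαs : 0 < αs)
    (hSlow : ∀ v : H, αs * ⟪N v, v⟫ ≤ S v v)
    (ah : H → H → ℝ)
    (hah : ∀ v w : H, ah v w = ⟪N (P v), P w⟫ + S (v - P v) (w - P w)) :
    ∀ v : H,
      νmin * (‖P v‖ ^ 2 + αs * ‖v - P v‖ ^ 2) ≤ ah v v ∧
      (νmin * min 1 αs) * ‖v‖ ^ 2 ≤ νmin * (‖P v‖ ^ 2 + αs * ‖v - P v‖ ^ 2) := by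
  obtain rfl : P = K.starProjection := ContinuousLinearMap.ext hP
  intro v
  refine ⟨?_, ?_⟩
  · rw [hah]
    exact mul_norm_sq_add_le_inner_add_of_stable hαs.le hNlow hSlow _ _
  · rw [K.norm_sq_eq_norm_sq_starProjection_add_norm_sq_sub v, mul_assoc]
    exact mul_le_mul_of_nonneg_left
      (min_one_mul_add_le_add_mul (sq_nonneg _) (sq_nonneg _)) hνmin.le

/-- **Ellipticity of the discretized VEM bilinear form** (second half of Lemma 3.1).
For all `v ∈ H`, `a_h(v,v) ≥ ν_min (‖P v‖² + α_* ‖v − P v‖²) ≥ α ‖v‖²` with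
`α = ν_min * min 1 α_*`. -/
theorem vem_discrete_form_ellipticity
    {H : Type*} [NormedAddCommGroup H] [InnerProductSpace ℝ H]
    (K : Submodule ℝ H) [K.HasOrthogonalProjection]
    (P : H →L[ℝ] H) (hP : ∀ v : H, P v = (K.orthogonalProjectionOnto v : H))
    (N : H →L[ℝ] H) (hNsa : ∀ v w : H, ⟪N v, w⟫ = ⟪v, N w⟫)
    (νmin νmax : ℝ) (hνmin : 0 < νmin) (hνν : νmin ≤ νmax)
    (hNlow : ∀ v : H, νmin * ‖v‖ ^ 2 ≤ ⟪N v, v⟫)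
    (hNhigh : ∀ v : H, ‖N v‖ ≤ νmax * ‖v‖)
    (S : H →ₗ[ℝ] H →ₗ[ℝ] ℝ) (hSsymm : ∀ v w : H, S v w = S w v)
    (αs αS : ℝ) (hαs : 0 < αs) (hαα : αs ≤ αS)
    (hSlow : ∀ v : H, αs * ⟪N v, v⟫ ≤ S v v)
    (hShigh : ∀ v : H, S v v ≤ αS * ⟪N v, v⟫)
    (ah : H → H → ℝ)
    (hah : ∀ v w : H, ah v w = ⟪N (P v), P w⟫ + S (v - P v) (w - P w)) :
    ∀ v : H,
      νmin * (‖P v‖ ^ 2 + αs * ‖v - P v‖ ^ 2) ≤ ah v v ∧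
      (νmin * min 1 αs) * ‖v‖ ^ 2 ≤ νmin * (‖P v‖ ^ 2 + αs * ‖v - P v‖ ^ 2) :=
  vem_discrete_form_ellipticity_general K P hP N νmin hνmin hNlow S αs hαs hSlow ah hah
end

section
/- (Consistency-error bound for the term T₁, estimate (4.8)/(4.9) of the paper.) For all v, w ∈ H one has |⟨N(P w), P v⟩ − ⟨N w, v⟩| ≤ (2 ν_max ‖w − P w‖ + ‖N w − P(N w)‖) · ‖v‖. By the symmetry of this expression in v and w (N being self-adjoint and P an orthogonal projection), the same quantity is also bounded by (2 ν_max ‖v − P v‖ + ‖N v − P(N v)‖) · ‖w‖. -/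
open scoped RealInnerProductSpace

/-
Write `Q = 1 - P` for the complementary projection. Then
`⟪N w, v⟫ - ⟪N (P w), P v⟫ = ⟪N (Q w), P v⟫ + ⟪N w, Q v⟫`, and since `Q v ⟂ K` the last term
equals `⟪Q (N w), Q v⟫`. Cauchy–Schwarz with `‖P v‖, ‖Q v‖ ≤ ‖v‖` and `‖N‖ ≤ ν_max` gives the
first bound; the second follows by exchanging `v` and `w`, which leaves the left-hand side unchanged because `N` is self-adjoint.
-/

namespace Submodule

variable {𝕜 E : Type*} [RCLike 𝕜] [NormedAddCommGroup E] [InnerProductSpace 𝕜 E]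
  (K : Submodule 𝕜 E) [K.HasOrthogonalProjection]

theorem inner_sub_starProjection_right (x v : E) :
    inner 𝕜 x (v - K.starProjection v)
      = inner 𝕜 (x - K.starProjection x) (v - K.starProjection v) := by
  have h : inner 𝕜 (K.starProjection x) (v - K.starProjection v) = 0 :=
    inner_eq_zero_symm.mp <| K.starProjection_inner_eq_zero v _ (K.starProjection_apply_mem x)
  rw [inner_sub_left, h, sub_zero]

theorem norm_inner_sub_starProjection_right_le (x v : E) :
    ‖inner 𝕜 x (v - K.starProjection v)‖ ≤ ‖x - K.starProjection x‖ * ‖v‖ := by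
  have hQ : ‖v - K.starProjection v‖ ≤ ‖v‖ := by
    rw [← starProjection_orthogonal_val]
    exact Kᗮ.norm_starProjection_apply_le v
  rw [inner_sub_starProjection_right]
  exact (norm_inner_le_norm _ _).trans (by gcongr)

theorem norm_inner_map_starProjection_sub_le (N : E →L[𝕜] E) {c : ℝ}
    (hN : ∀ u, ‖N u‖ ≤ c * ‖u‖) (v w : E) :
    ‖inner 𝕜 (N (K.starProjection w)) (K.starProjection v) - inner 𝕜 (N w) v‖
      ≤ (c * ‖w - K.starProjection w‖ + ‖N w - K.starProjection (N w)‖) * ‖v‖ := by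
  set P := K.starProjection
  have hsplit : inner 𝕜 (N (P w)) (P v) - inner 𝕜 (N w) v
      = -(inner 𝕜 (N (w - P w)) (P v) + inner 𝕜 (N w) (v - P v)) := by
    simp only [map_sub, inner_sub_left, inner_sub_right]
    ring
  have hfirst : ‖inner 𝕜 (N (w - P w)) (P v)‖ ≤ c * ‖w - P w‖ * ‖v‖ :=
    (norm_inner_le_norm _ _).trans <|
      mul_le_mul (hN _) (K.norm_starProjection_apply_le v) (norm_nonneg _)
        ((norm_nonneg _).trans (hN _))
  rw [hsplit, norm_neg, add_mul]
  exact (norm_add_le _ _).trans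
    (add_le_add hfirst (K.norm_inner_sub_starProjection_right_le _ _))

end Submodule

theorem vem_T1_bound_general
    {H : Type*} [NormedAddCommGroup H] [InnerProductSpace ℝ H]
    (K : Submodule ℝ H) [K.HasOrthogonalProjection]
    (P : H →L[ℝ] H) (hP : ∀ v : H, P v = (K.orthogonalProjectionOnto v : H))
    (N : H →L[ℝ] H) (hNsa : ∀ v w : H, ⟪N v, w⟫ = ⟪v, N w⟫)
    (νmax : ℝ)
    (hNhigh : ∀ v : H, ‖N v‖ ≤ νmax * ‖v‖) :
    ∀ v w : H,
      |⟪N (P w), P v⟫ - ⟪N w, v⟫|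
        ≤ (2 * νmax * ‖w - P w‖ + ‖N w - P (N w)‖) * ‖v‖ ∧
      |⟪N (P w), P v⟫ - ⟪N w, v⟫|
        ≤ (2 * νmax * ‖v - P v‖ + ‖N v - P (N v)‖) * ‖w‖ := by
  obtain rfl : P = K.starProjection := ContinuousLinearMap.ext hP
  have hbound : ∀ v w : H, |⟪N (K.starProjection w), K.starProjection v⟫ - ⟪N w, v⟫|
      ≤ (2 * νmax * ‖w - K.starProjection w‖ + ‖N w - K.starProjection (N w)‖) * ‖v‖ := by
    intro v w
    have hc : 0 ≤ νmax * ‖w - K.starProjection w‖ := (norm_nonneg _).trans (hNhigh _)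
    rw [← Real.norm_eq_abs]
    refine (K.norm_inner_map_starProjection_sub_le N hNhigh v w).trans ?_
    exact mul_le_mul_of_nonneg_right (by linarith) (norm_nonneg v)
  have hsymm : ∀ v w : H, ⟪N (K.starProjection w), K.starProjection v⟫ - ⟪N w, v⟫
      = ⟪N (K.starProjection v), K.starProjection w⟫ - ⟪N v, w⟫ := by
    intro v w
    rw [hNsa, hNsa w, real_inner_comm (K.starProjection w), real_inner_comm w]
  exact fun v w => ⟨hbound v w, hsymm v w ▸ hbound w v⟩

/-- **Consistency-error bound for the term T₁** (estimates (4.8)/(4.9) of the paper).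
`|⟪N(P w), P v⟫ − ⟪N w, v⟫| ≤ (2 ν_max ‖w − P w‖ + ‖N w − P(N w)‖) ‖v‖`, and by
symmetry the same quantity is also bounded by
`(2 ν_max ‖v − P v‖ + ‖N v − P(N v)‖) ‖w‖`. -/
theorem vem_T1_bound
    {H : Type*} [NormedAddCommGroup H] [InnerProductSpace ℝ H]
    (K : Submodule ℝ H) [K.HasOrthogonalProjection]
    (P : H →L[ℝ] H) (hP : ∀ v : H, P v = (K.orthogonalProjectionOnto v : H))
    (N : H →L[ℝ] H) (hNsa : ∀ v w : H, ⟪N v, w⟫ = ⟪v, N w⟫)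
    (νmin νmax : ℝ) (hνmin : 0 < νmin) (hνν : νmin ≤ νmax)
    (hNlow : ∀ v : H, νmin * ‖v‖ ^ 2 ≤ ⟪N v, v⟫)
    (hNhigh : ∀ v : H, ‖N v‖ ≤ νmax * ‖v‖) :
    ∀ v w : H,
      |⟪N (P w), P v⟫ - ⟪N w, v⟫|
        ≤ (2 * νmax * ‖w - P w‖ + ‖N w - P (N w)‖) * ‖v‖ ∧
      |⟪N (P w), P v⟫ - ⟪N w, v⟫|
        ≤ (2 * νmax * ‖v - P v‖ + ‖N v - P (N v)‖) * ‖w‖ :=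
  vem_T1_bound_general K P hP N hNsa νmax hNhigh
end

section
/- (Combined consistency-error estimate, estimate (4.12) of the paper.) Define the consistency discrepancy D(w, r, v) := a_h(w,v) − a(w,v) + ⟨P v − v, B r⟩. Then for all w, v ∈ H and r ∈ H' one has |D(w, r, v)| ≤ ( (2 + α^*) ν_max + ‖B‖ ) · ‖v − P v‖ · ( ‖w‖ + ‖r‖ ) + ‖N v − P(N v)‖ · ‖w‖, where ‖B‖ denotes the operator norm of B. -/
open scoped RealInnerProductSpace

/-!
Write `P` for the orthogonal projection onto `K`. By self-adjointness of `N` and orthogonality of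
`w - P w` to `K`,
`⟪N (P w), P v⟫ - ⟪N w, v⟫ = ⟪N (P w), P v - v⟫ + ⟪P w - w, N v - P (N v)⟫`,
so every term of `D(w, r, v)` carries a factor `v - P v` except the one carrying `N v - P (N v)`.
The stabilization term is bounded through the Cauchy–Schwarz inequality for the positive
semidefinite form `S`, and all remaining factors by Cauchy–Schwarz in `H` together with
`‖P x‖ ≤ ‖x‖` and `‖x - P x‖ ≤ ‖x‖`.
-/

namespace Submodule

variable {H : Type*} [NormedAddCommGroup H] [InnerProductSpace ℝ H]
  (K : Submodule ℝ H) [K.HasOrthogonalProjection]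

theorem norm_sub_starProjection_apply_le (v : H) : ‖v - K.starProjection v‖ ≤ ‖v‖ := by
  simpa [starProjection_orthogonal] using Kᗮ.norm_starProjection_apply_le v

theorem inner_map_starProjection_sub_inner_map {T : H →L[ℝ] H}
    (hT : (T : H →ₗ[ℝ] H).IsSymmetric) (w v : H) :
    ⟪T (K.starProjection w), K.starProjection v⟫ - ⟪T w, v⟫ =
      ⟪T (K.starProjection w), K.starProjection v - v⟫ +
        ⟪K.starProjection w - w, T v - K.starProjection (T v)⟫ := by
  have horth : ⟪w - K.starProjection w, K.starProjection (T v)⟫ = 0 :=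
    K.starProjection_inner_eq_zero w _ (K.starProjection_apply_mem _)
  have hTPw : ⟪T (K.starProjection w), v⟫ = ⟪K.starProjection w, T v⟫ := hT _ _
  have hTw : ⟪T w, v⟫ = ⟪w, T v⟫ := hT _ _
  simp only [inner_sub_left, inner_sub_right] at horth ⊢
  linarith

theorem abs_inner_map_starProjection_add_sub_inner_map_le {T : H →L[ℝ] H}
    (hT : (T : H →ₗ[ℝ] H).IsSymmetric) {c : ℝ} (hc : 0 ≤ c) (hTc : ∀ x, ‖T x‖ ≤ c * ‖x‖)
    (S : LinearMap.BilinForm ℝ H) {C : ℝ} (hC : 0 ≤ C) (hSC : ∀ x y, |S x y| ≤ C * ‖x‖ * ‖y‖)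
    (w v : H) :
    |⟪T (K.starProjection w), K.starProjection v⟫
        + S (w - K.starProjection w) (v - K.starProjection v) - ⟪T w, v⟫|
      ≤ (c + C) * ‖w‖ * ‖v - K.starProjection v‖ + ‖T v - K.starProjection (T v)‖ * ‖w‖ := by
  set P := K.starProjection
  have hPv : ‖P v - v‖ = ‖v - P v‖ := norm_sub_rev _ _
  have hPw : ‖P w - w‖ ≤ ‖w‖ := norm_sub_rev w (P w) ▸ K.norm_sub_starProjection_apply_le w
  have hT₁ : |⟪T (P w), P v - v⟫| ≤ c * ‖w‖ * ‖v - P v‖ :=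
    (abs_real_inner_le_norm _ _).trans <| by
      rw [hPv]; gcongr; exact (hTc _).trans (by gcongr; exact K.norm_starProjection_apply_le w)
  have hT₂ : |⟪P w - w, T v - P (T v)⟫| ≤ ‖T v - P (T v)‖ * ‖w‖ :=
    (abs_real_inner_le_norm _ _).trans <| by rw [mul_comm]; gcongr
  have hS : |S (w - P w) (v - P v)| ≤ C * ‖w‖ * ‖v - P v‖ :=
    (hSC _ _).trans <| by gcongr; exact K.norm_sub_starProjection_apply_le w
  rw [add_sub_right_comm, K.inner_map_starProjection_sub_inner_map hT]
  calc _ ≤ |⟪T (P w), P v - v⟫| + |⟪P w - w, T v - P (T v)⟫| + |S (w - P w) (v - P v)| :=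
        abs_add_three _ _ _
    _ ≤ _ := by linarith

end Submodule

theorem real_inner_map_self_le {H : Type*} [NormedAddCommGroup H]
    [InnerProductSpace ℝ H] {T : H →ₗ[ℝ] H} {c : ℝ} (hT : ∀ x, ‖T x‖ ≤ c * ‖x‖) (x : H) :
    ⟪T x, x⟫ ≤ c * ‖x‖ ^ 2 :=
  calc ⟪T x, x⟫ ≤ ‖T x‖ * ‖x‖ := real_inner_le_norm _ _
    _ ≤ c * ‖x‖ * ‖x‖ := by gcongr; exact hT x
    _ = c * ‖x‖ ^ 2 := by ring

theorem LinearMap.BilinForm.abs_apply_le_of_apply_self_le_s8 {E : Type*} [SeminormedAddCommGroup E]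
    [NormedSpace ℝ E] (S : LinearMap.BilinForm ℝ E) (hS : LinearMap.IsSymm S) (hS0 : ∀ x, 0 ≤ S x x)
    {C : ℝ} (hC0 : 0 ≤ C) (hC : ∀ x, S x x ≤ C * ‖x‖ ^ 2) (x y : E) :
    |S x y| ≤ C * ‖x‖ * ‖y‖ := by
  refine abs_le_of_sq_le_sq ?_ (by positivity)
  calc S x y ^ 2 ≤ S x x * S y y := S.apply_sq_le_of_symm hS0 hS x y
    _ ≤ (C * ‖x‖ ^ 2) * (C * ‖y‖ ^ 2) := mul_le_mul (hC x) (hC y) (hS0 y) (by positivity)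
    _ = (C * ‖x‖ * ‖y‖) ^ 2 := by ring

/-- **Combined consistency-error estimate** (estimate (4.12) of the paper).
With `D(w, r, v) := a_h(w,v) − a(w,v) + ⟪P v − v, B r⟫`, one has
`|D(w, r, v)| ≤ ((2 + α^*) ν_max + ‖B‖) ‖v − P v‖ (‖w‖ + ‖r‖) + ‖N v − P(N v)‖ ‖w‖`. -/
theorem vem_consistency_error_4_12
    {H : Type*} [NormedAddCommGroup H] [InnerProductSpace ℝ H]
    {H' : Type*} [NormedAddCommGroup H'] [InnerProductSpace ℝ H']
    (K : Submodule ℝ H) [K.HasOrthogonalProjection]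
    (P : H →L[ℝ] H) (hP : ∀ v : H, P v = (K.orthogonalProjectionOnto v : H))
    (N : H →L[ℝ] H) (hNsa : ∀ v w : H, ⟪N v, w⟫ = ⟪v, N w⟫)
    (νmin νmax : ℝ) (hνmin : 0 < νmin) (hνν : νmin ≤ νmax)
    (hNlow : ∀ v : H, νmin * ‖v‖ ^ 2 ≤ ⟪N v, v⟫)
    (hNhigh : ∀ v : H, ‖N v‖ ≤ νmax * ‖v‖)
    (S : H →ₗ[ℝ] H →ₗ[ℝ] ℝ) (hSsymm : ∀ v w : H, S v w = S w v)
    (αs αS : ℝ) (hαs : 0 < αs) (hαα : αs ≤ αS)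
    (hSlow : ∀ v : H, αs * ⟪N v, v⟫ ≤ S v v)
    (hShigh : ∀ v : H, S v v ≤ αS * ⟪N v, v⟫)
    (ah : H → H → ℝ)
    (hah : ∀ v w : H, ah v w = ⟪N (P v), P w⟫ + S (v - P v) (w - P w))
    (B : H' →L[ℝ] H)
    (D : H → H' → H → ℝ)
    (hD : ∀ (w : H) (r : H') (v : H),
      D w r v = ah w v - ⟪N w, v⟫ + ⟪P v - v, B r⟫) :
    ∀ (w : H) (r : H') (v : H),
      |D w r v|
        ≤ ((2 + αS) * νmax + ‖B‖) * ‖v - P v‖ * (‖w‖ + ‖r‖)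
          + ‖N v - P (N v)‖ * ‖w‖ := by
  intro w r v
  obtain rfl : P = K.starProjection := ContinuousLinearMap.ext hP
  set P := K.starProjection
  have hνmax : 0 ≤ νmax := hνmin.le.trans hνν
  have hαS : 0 ≤ αS := hαs.le.trans hαα
  have hN (x : H) : 0 ≤ ⟪N x, x⟫ := (mul_nonneg hνmin.le (sq_nonneg _)).trans (hNlow x)
  have hS (x y : H) : |S x y| ≤ αS * νmax * ‖x‖ * ‖y‖ :=
    LinearMap.BilinForm.abs_apply_le_of_apply_self_le_s8 S ⟨hSsymm⟩
      (fun x => (mul_nonneg hαs.le (hN x)).trans (hSlow x)) (by positivity)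
      (fun x => (hShigh x).trans <| by
        rw [mul_assoc]; exact mul_le_mul_of_nonneg_left (real_inner_map_self_le hNhigh x) hαS) x y
  rw [hD, hah]
  calc _ ≤ |⟪N (P w), P v⟫ + S (w - P w) (v - P v) - ⟪N w, v⟫| + |⟪P v - v, B r⟫| :=
        abs_add_le _ _
    _ ≤ (νmax + αS * νmax) * ‖w‖ * ‖v - P v‖ + ‖N v - P (N v)‖ * ‖w‖
        + ‖B‖ * ‖r‖ * ‖v - P v‖ := by
      gcongr
      · exact K.abs_inner_map_starProjection_add_sub_inner_map_le hNsa hνmax hNhigh S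
          (by positivity) hS w v
      · exact (abs_real_inner_le_norm _ _).trans <| by
          rw [norm_sub_rev, mul_comm]; gcongr; exact B.le_opNorm r
    _ ≤ _ := by
      have : 0 ≤ (νmax * ‖w‖ + (2 + αS) * νmax * ‖r‖ + ‖B‖ * ‖w‖) * ‖v - P v‖ := by positivity
      linarith
end
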